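/- arXiv:1410.3447 — 2 statements merged into one kernel-verified Lean document; each statement's English description precedes it below -/
import Mathlib

section
/- Let A ∈ ℝ^{n×n} and B ∈ ℝ^{n×m} with (A,B) a controllable pair, let Σ be a symmetric positive definite n×n matrix, and suppose X ∈ ℝ^{n×m} satisfies AΣ + ΣAᵀ + BXᵀ + XBᵀ = 0. Then, setting K := (1/2)BᵀΣ⁻¹ − XᵀΣ⁻¹, one has (A − BK)Σ + Σ(A − BK)ᵀ + BBᵀ = 0, and A − BK is Hurwitz. -/
open Matrix

/-- The controllability matrix `[B, AB, A²B, …, A^{n−1}B]` (columns indexed by `Fin n × Fin m`). -/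
def ctrbMatrix {n m : ℕ} (A : Matrix (Fin n) (Fin n) ℝ) (B : Matrix (Fin n) (Fin m) ℝ) :
    Matrix (Fin n) (Fin n × Fin m) ℝ :=
  Matrix.of fun i p => ((A ^ (p.1 : ℕ)) * B) i p.2

/-- `(A,B)` is a controllable pair iff the controllability matrix has rank `n`. -/
def IsControllablePair {n m : ℕ} (A : Matrix (Fin n) (Fin n) ℝ)
    (B : Matrix (Fin n) (Fin m) ℝ) : Prop :=
  (ctrbMatrix A B).rank = n

/-- A real square matrix is Hurwitz iff all its (complex) eigenvalues have negative real part. -/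
def IsHurwitz {n : ℕ} (F : Matrix (Fin n) (Fin n) ℝ) : Prop :=
  ∀ μ ∈ spectrum ℂ (F.map (algebraMap ℝ ℂ)), μ.re < 0

/-!
`K` is chosen so that `KΣ = ½Bᵀ − Xᵀ`; this turns the hypothesis into the Lyapunov equation
`FΣ + ΣFᵀ + BBᵀ = 0` for `F = A − BK`. If `v F = μ v` for a nonzero complex row vector `v`,
pairing the equation with `v` and `v̄` gives `2 Re μ · (v Σ v̄ᵀ) + ‖v B‖² = 0`, where
`v Σ v̄ᵀ > 0`. Finally `v B ≠ 0`: otherwise `v A = μ v`, so `v` annihilates every `Aᵏ B`,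
contradicting controllability (the Hautus test). Hence `Re μ < 0`.
-/

open scoped ComplexOrder

theorem Matrix.isUnit_of_rank_eq_card {K ι : Type*} [Field K] [Fintype ι] [DecidableEq ι]
    {P : Matrix ι ι K} (h : P.rank = Fintype.card ι) : IsUnit P := by
  rw [← mulVec_surjective_iff_isUnit, ← coe_mulVecLin, ← LinearMap.range_eq_top]
  apply Submodule.eq_top_of_finrank_eq
  rw [← rank, h, Module.finrank_fintype_fun_eq_card]

theorem Matrix.eq_zero_of_vecMul_map_eq_zero {K L ι κ : Type*} [Field K] [LinearOrder K]
    [IsStrictOrderedRing K] [Field L] [Algebra K L] [Fintype ι] [DecidableEq ι] [Fintype κ]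
    {M : Matrix ι κ K} (hM : M.rank = Fintype.card ι) {v : ι → L}
    (hv : v ᵥ* M.map (algebraMap K L) = 0) : v = 0 := by
  -- full row rank is witnessed by the invertibility of `M Mᵀ`, which survives the base change
  have hunit : IsUnit ((M * Mᵀ).map (algebraMap K L)) :=
    (isUnit_of_rank_eq_card (by rw [rank_self_mul_transpose, hM])).map
      (algebraMap K L).mapMatrix
  apply vecMul_injective_iff_isUnit.2 hunit
  dsimp only
  rw [Matrix.map_mul, ← vecMul_vecMul, hv, zero_vecMul, zero_vecMul]

theorem Matrix.exists_vecMul_eq_smul_of_mem_spectrum {K ι : Type*} [Field K] [Fintype ι]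
    [DecidableEq ι] {F : Matrix ι ι K} {μ : K} (hμ : μ ∈ spectrum K F) :
    ∃ v ≠ 0, v ᵥ* F = μ • v := by
  rw [spectrum.mem_iff, isUnit_iff_isUnit_det, isUnit_iff_ne_zero, not_not] at hμ
  obtain ⟨v, hv, hvF⟩ := exists_vecMul_eq_zero_iff.mpr hμ
  refine ⟨v, hv, ?_⟩
  rw [vecMul_sub, sub_eq_zero, algebraMap_eq_diagonal] at hvF
  rw [← hvF]
  ext j
  simp [vecMul_diagonal, mul_comm]

theorem Matrix.PosDef.map_ofReal {ι : Type*} [Fintype ι] {S : Matrix ι ι ℝ} (hS : S.PosDef) :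
    (S.map (algebraMap ℝ ℂ)).PosDef := by
  have hSc : (S.map (algebraMap ℝ ℂ)).IsHermitian := hS.1.map _ fun _ => by simp
  refine .of_dotProduct_mulVec_pos hSc fun x hx => ?_
  set xr : ι → ℝ := fun i => (x i).re
  set xi : ι → ℝ := fun i => (x i).im
  have hre : (star x ⬝ᵥ (S.map (algebraMap ℝ ℂ) *ᵥ x)).re
      = xr ⬝ᵥ (S *ᵥ xr) + xi ⬝ᵥ (S *ᵥ xi) := by
    simp only [dotProduct, mulVec, Matrix.map_apply, Finset.mul_sum, ← Finset.sum_add_distrib,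
      Complex.re_sum]
    refine Finset.sum_congr rfl fun i _ => Finset.sum_congr rfl fun j _ => ?_
    simp [Complex.mul_re, Complex.mul_im, xr, xi]
  have hpart : xr ≠ 0 ∨ xi ≠ 0 := by
    by_contra! h
    exact hx (funext fun i => Complex.ext (congrFun h.1 i) (congrFun h.2 i))
  have hpos : 0 < xr ⬝ᵥ (S *ᵥ xr) + xi ⬝ᵥ (S *ᵥ xi) := by
    have hr := hS.posSemidef.dotProduct_mulVec_nonneg xr
    have hi := hS.posSemidef.dotProduct_mulVec_nonneg xi
    simp only [star_trivial] at hr hi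
    rcases hpart with h | h <;> have := hS.dotProduct_mulVec_pos h <;>
      simp only [star_trivial] at this <;> linarith
  exact Complex.pos_iff.2 ⟨hre ▸ hpos, (hSc.im_star_dotProduct_mulVec_self x).symm⟩

theorem Matrix.re_lt_zero_of_lyapunov {𝕜 ι κ : Type*} [RCLike 𝕜] [Fintype ι] [Fintype κ]
    {F S : Matrix ι ι 𝕜} {B : Matrix ι κ 𝕜} (hS : S.PosDef) (hL : F * S + S * Fᴴ + B * Bᴴ = 0)
    {μ : 𝕜} {v : ι → 𝕜} (hvF : v ᵥ* F = μ • v) (hvB : v ᵥ* B ≠ 0) : RCLike.re μ < 0 := by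
  have hv : v ≠ 0 := by rintro rfl; simp at hvB
  set q := v ⬝ᵥ (S *ᵥ star v)
  set r := (v ᵥ* B) ⬝ᵥ star (v ᵥ* B)
  have hq : 0 < RCLike.re q := by simpa using hS.re_dotProduct_pos (star_ne_zero.2 hv)
  have hr : 0 < RCLike.re r := (RCLike.pos_iff.1 (dotProduct_self_star_pos_iff.2 hvB)).1
  -- pair the Lyapunov equation with `v` on the left and `star v` on the right
  have hform : μ * q + star μ * q + r = 0 := by
    have h := congrArg (fun M => v ⬝ᵥ (M *ᵥ star v)) hL
    simp only [add_mulVec, dotProduct_add, ← mulVec_mulVec, dotProduct_mulVec, ← star_vecMul,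
      hvF, star_smul, mulVec_smul, smul_vecMul, smul_dotProduct, smul_eq_mul, zero_mulVec,
      dotProduct_zero] at h
    simpa [q, r, dotProduct_mulVec] using h
  have hre := congrArg RCLike.re hform
  simp only [map_add, RCLike.mul_re, RCLike.star_def, RCLike.conj_re, RCLike.conj_im,
    map_zero] at hre
  nlinarith

theorem isHurwitz_of_lyapunov {n m : ℕ} {F S : Matrix (Fin n) (Fin n) ℝ}
    {B : Matrix (Fin n) (Fin m) ℝ} (hS : S.PosDef) (hL : F * S + S * Fᵀ + B * Bᵀ = 0)
    (hPBH : ∀ (μ : ℂ) (v : Fin n → ℂ), v ᵥ* F.map (algebraMap ℝ ℂ) = μ • v →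
      v ᵥ* B.map (algebraMap ℝ ℂ) = 0 → v = 0) :
    IsHurwitz F := by
  intro μ hμ
  obtain ⟨v, hv, hvF⟩ := exists_vecMul_eq_smul_of_mem_spectrum hμ
  have hLc : F.map (algebraMap ℝ ℂ) * S.map (algebraMap ℝ ℂ)
      + S.map (algebraMap ℝ ℂ) * (F.map (algebraMap ℝ ℂ))ᴴ
      + B.map (algebraMap ℝ ℂ) * (B.map (algebraMap ℝ ℂ))ᴴ = 0 := by
    have hstar : Function.Semiconj (algebraMap ℝ ℂ) star star := fun _ => by simp
    have h := congrArg (algebraMap ℝ ℂ).mapMatrix hL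
    simp only [map_add, map_zero, RingHom.mapMatrix_apply, Matrix.map_mul] at h
    rwa [← conjTranspose_map _ hstar, ← conjTranspose_map _ hstar,
      conjTranspose_eq_transpose_of_trivial, conjTranspose_eq_transpose_of_trivial]
  exact re_lt_zero_of_lyapunov hS.map_ofReal hLc hvF fun hvB => hv (hPBH μ v hvF hvB)

theorem IsControllablePair.eq_zero_of_vecMul_eq_smul {n m : ℕ} {A : Matrix (Fin n) (Fin n) ℝ}
    {B : Matrix (Fin n) (Fin m) ℝ} (hAB : IsControllablePair A B) {μ : ℂ} {v : Fin n → ℂ}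
    (hvA : v ᵥ* A.map (algebraMap ℝ ℂ) = μ • v) (hvB : v ᵥ* B.map (algebraMap ℝ ℂ) = 0) :
    v = 0 := by
  have hpow (k : ℕ) : v ᵥ* (A ^ k).map (algebraMap ℝ ℂ) = μ ^ k • v := by
    induction k with
    | zero => simp
    | succ k ih =>
      rw [pow_succ, Matrix.map_mul, ← vecMul_vecMul, ih, smul_vecMul, hvA, smul_smul, pow_succ]
  refine eq_zero_of_vecMul_map_eq_zero (hAB.trans (Fintype.card_fin n).symm) ?_
  ext ⟨k, j⟩
  calc (v ᵥ* (ctrbMatrix A B).map (algebraMap ℝ ℂ)) (k, j)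
      = (v ᵥ* (A ^ (k : ℕ) * B).map (algebraMap ℝ ℂ)) j := rfl
    _ = 0 := by rw [Matrix.map_mul, ← vecMul_vecMul, hpow, smul_vecMul, hvB, smul_zero]; rfl

theorem closedLoop_lyapunov_eq {ι κ : Type*} [Fintype ι] [DecidableEq ι] [Fintype κ]
    (A S : Matrix ι ι ℝ) (B X : Matrix ι κ ℝ) (hS : IsUnit S.det) (hSt : Sᵀ = S) :
    (A - B * ((1/2 : ℝ) • (Bᵀ * S⁻¹) - Xᵀ * S⁻¹)) * S
      + S * (A - B * ((1/2 : ℝ) • (Bᵀ * S⁻¹) - Xᵀ * S⁻¹))ᵀ + B * Bᵀ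
      = A * S + S * Aᵀ + B * Xᵀ + X * Bᵀ := by
  set K := (1/2 : ℝ) • (Bᵀ * S⁻¹) - Xᵀ * S⁻¹
  have hKS : K * S = (1/2 : ℝ) • Bᵀ - Xᵀ := by
    simp only [K, Matrix.sub_mul, Matrix.smul_mul, Matrix.mul_assoc, nonsing_inv_mul S hS,
      Matrix.mul_one]
  have hSK : S * Kᵀ = (1/2 : ℝ) • B - X := by
    rw [← transpose_transpose (S * Kᵀ), transpose_mul, transpose_transpose, hSt, hKS,
      transpose_sub, transpose_smul, transpose_transpose, transpose_transpose]
  rw [sub_mul, transpose_sub, transpose_mul, mul_sub, ← Matrix.mul_assoc S, Matrix.mul_assoc B,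
    hKS, hSK]
  simp only [Matrix.mul_sub, Matrix.sub_mul, Matrix.mul_smul, Matrix.smul_mul]
  module

/-- if `(A,B)` is controllable, `Σ ≻ 0` and
`AΣ + ΣAᵀ + BXᵀ + XBᵀ = 0`, then `K := (1/2)BᵀΣ⁻¹ − XᵀΣ⁻¹` satisfies
`(A−BK)Σ + Σ(A−BK)ᵀ + BBᵀ = 0` and `A−BK` is Hurwitz. -/
theorem stmt9 {n m : ℕ} (A : Matrix (Fin n) (Fin n) ℝ) (B : Matrix (Fin n) (Fin m) ℝ)
    (hAB : IsControllablePair A B)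
    (S : Matrix (Fin n) (Fin n) ℝ) (hS : S.PosDef)
    (X : Matrix (Fin n) (Fin m) ℝ)
    (hX : A * S + S * Aᵀ + B * Xᵀ + X * Bᵀ = 0) :
    (A - B * ((1/2 : ℝ) • (Bᵀ * S⁻¹) - Xᵀ * S⁻¹)) * S
      + S * (A - B * ((1/2 : ℝ) • (Bᵀ * S⁻¹) - Xᵀ * S⁻¹))ᵀ + B * Bᵀ = 0 ∧
    IsHurwitz (A - B * ((1/2 : ℝ) • (Bᵀ * S⁻¹) - Xᵀ * S⁻¹)) := by
  have hL := (closedLoop_lyapunov_eq A S B X ((isUnit_iff_isUnit_det S).1 hS.isUnit) hS.1).trans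
    hX
  refine ⟨hL, isHurwitz_of_lyapunov hS hL fun μ v hvF hvB =>
    hAB.eq_zero_of_vecMul_eq_smul (μ := μ) ?_ hvB⟩
  -- a left eigenvector of `A - B K` annihilating `B` is a left eigenvector of `A`
  rwa [Matrix.map_sub _ (map_sub _), Matrix.map_mul, vecMul_sub, ← vecMul_vecMul, hvB,
    zero_vecMul, sub_zero] at hvF
end

section
/- Let F ∈ ℝ^{n×n}, let Σ be a symmetric positive definite n×n real matrix, and let Q be a symmetric positive semidefinite n×n real matrix such that FΣ + ΣFᵀ + Q = 0. Then every eigenvalue of F, viewed as a complex matrix, has real part less than or equal to zero; i.e., the spectrum of F lies in the closed left half-plane. -/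
open Matrix

/-! If `x` is a left eigenvector of `A` for the eigenvalue `μ`, sandwiching the Lyapunov identity
`A P + P Aᴴ + Q = 0` between `xᴴ` and `x` gives `2 Re μ · xᴴPx + xᴴQx = 0`, with `xᴴPx > 0` and
`xᴴQx ≥ 0`; hence `Re μ ≤ 0`. A real equation is first complexified, which preserves positive
(semi)definiteness. -/

open scoped ComplexOrder

namespace Matrix

variable {n : Type*} [Fintype n] [DecidableEq n]

lemma exists_vecMul_eq_smul_of_mem_spectrum_s19 {K : Type*} [Field K] {A : Matrix n n K} {μ : K}
    (hμ : μ ∈ spectrum K A) : ∃ w ≠ 0, w ᵥ* A = μ • w := by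
  rw [spectrum.mem_iff, isUnit_iff_isUnit_det, isUnit_iff_ne_zero, not_not,
    ← exists_vecMul_eq_zero_iff] at hμ
  obtain ⟨w, hw, hwA⟩ := hμ
  refine ⟨w, hw, ?_⟩
  rwa [vecMul_sub, sub_eq_zero, Algebra.algebraMap_eq_smul_one, vecMul_smul, vecMul_one,
    eq_comm] at hwA

lemma re_nonpos_of_mem_spectrum_of_lyapunov {𝕜 : Type*} [RCLike 𝕜] {A P Q : Matrix n n 𝕜}
    (hP : P.PosDef) (hQ : Q.PosSemidef) (hA : A * P + P * Aᴴ + Q = 0) {μ : 𝕜}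
    (hμ : μ ∈ spectrum 𝕜 A) : RCLike.re μ ≤ 0 := by
  obtain ⟨w, hw, hwA⟩ := exists_vecMul_eq_smul_of_mem_spectrum_s19 hμ
  set x := star w
  have hx : x ≠ 0 := star_ne_zero.mpr hw
  have hxA : star x ᵥ* A = μ • star x := by rwa [star_star]
  have hAx : Aᴴ *ᵥ x = star μ • x := by rw [← star_vecMul, hwA, star_smul]
  set p := star x ⬝ᵥ (P *ᵥ x)
  have hAP : star x ⬝ᵥ ((A * P) *ᵥ x) = μ * p := by
    rw [← mulVec_mulVec, dotProduct_mulVec, hxA, smul_dotProduct, smul_eq_mul]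
  have hPA : star x ⬝ᵥ ((P * Aᴴ) *ᵥ x) = star μ * p := by
    rw [← mulVec_mulVec, hAx, mulVec_smul, dotProduct_smul, smul_eq_mul]
  have hform : (μ + star μ) * p + star x ⬝ᵥ (Q *ᵥ x) = 0 := by
    rw [add_mul, ← hAP, ← hPA, ← dotProduct_add, ← dotProduct_add, ← add_mulVec, ← add_mulVec,
      hA, zero_mulVec, dotProduct_zero]
  have hre := congrArg RCLike.re hform
  rw [RCLike.star_def, RCLike.add_conj] at hre
  simp only [map_add, map_zero, mul_assoc, RCLike.ofNat_mul_re, RCLike.re_ofReal_mul] at hre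
  nlinarith [hP.re_dotProduct_pos hx, hQ.re_dotProduct_nonneg x]

open scoped MatrixOrder in
lemma PosSemidef.map_algebraMap_real {𝕜 : Type*} [RCLike 𝕜] {Q : Matrix n n ℝ}
    (hQ : Q.PosSemidef) : (Q.map (algebraMap ℝ 𝕜)).PosSemidef := by
  obtain ⟨B, rfl⟩ := CStarAlgebra.nonneg_iff_eq_star_mul_self.mp hQ.nonneg
  rw [star_eq_conjTranspose, Matrix.map_mul, conjTranspose_map _ algebraMap_star_comm]
  exact posSemidef_conjTranspose_mul_self _

lemma PosDef.map_algebraMap_real {𝕜 : Type*} [RCLike 𝕜] {P : Matrix n n ℝ}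
    (hP : P.PosDef) : (P.map (algebraMap ℝ 𝕜)).PosDef :=
  hP.posSemidef.map_algebraMap_real.posDef_iff_isUnit.mpr <|
    hP.isUnit.map (algebraMap ℝ 𝕜).mapMatrix

end Matrix

/-- if `FΣ + ΣFᵀ + Q = 0` with `Σ ≻ 0` and `Q ⪰ 0`, then the
spectrum of `F` lies in the closed left half-plane. -/
theorem stmt19 {n : ℕ} (F : Matrix (Fin n) (Fin n) ℝ)
    (S : Matrix (Fin n) (Fin n) ℝ) (hS : S.PosDef)
    (Q : Matrix (Fin n) (Fin n) ℝ) (hQ : Q.PosSemidef)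
    (hLyap : F * S + S * Fᵀ + Q = 0) :
    ∀ μ ∈ spectrum ℂ (F.map (algebraMap ℝ ℂ)), μ.re ≤ 0 := by
  intro μ hμ
  refine re_nonpos_of_mem_spectrum_of_lyapunov hS.map_algebraMap_real hQ.map_algebraMap_real
    ?_ hμ
  rw [← conjTranspose_map _ algebraMap_star_comm, conjTranspose_eq_transpose_of_trivial]
  simpa only [map_add, map_mul, map_zero, RingHom.mapMatrix_apply]
    using congrArg (algebraMap ℝ ℂ).mapMatrix hLyap
end
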